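/- Let Γ_𝒯 be the A₂-tilde group of a finite projective plane (P, L) with bijection σ : P ≃ L and compatible triella 𝒯, and let δ : Γ_𝒯 → ℕ × ℕ be the shape function. If w₀, w₁, w₂ ∈ Γ_𝒯 satisfy δ(w₀·w₁) = δ(w₀) + δ(w₁), δ(w₁·w₂) = δ(w₁) + δ(w₂), and (1,1) ≤ δ(w₁) componentwise, then δ(w₀·w₁·w₂) = δ(w₀) + δ(w₁) + δ(w₂). -/

import Mathlib

/-- The relations of the A₂-tilde group: `a_x a_y a_z = 1` for `(x, y, z) ∈ T`. -/
def A2Rels {P : Type} (T : Set (P × P × P)) : Set (FreeGroup P) :=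
  (fun t : P × P × P => FreeGroup.of t.1 * FreeGroup.of t.2.1 * FreeGroup.of t.2.2) '' T

/-- The A₂-tilde group associated to a triella `T`. -/
abbrev A2TildeGroup {P : Type} (T : Set (P × P × P)) : Type := PresentedGroup (A2Rels T)

/-- The generator `a_x` of the A₂-tilde group. -/
def a {P : Type} (T : Set (P × P × P)) (x : P) : A2TildeGroup T := PresentedGroup.of x

/-- `(xs, ys)` is a right normal form of `w`:
`w = a_{x₁} ⋯ a_{x_m} · a_{y₁}⁻¹ ⋯ a_{y_n}⁻¹` with `x_{i+1} ∉ σ x_i`, `y_j ∉ σ y_{j+1}`,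
and `x_m ≠ y₁` when both lists are nonempty. -/
def IsRNF {P L : Type} [Membership P L] (σ : P ≃ L) (T : Set (P × P × P))
    (w : A2TildeGroup T) (xs ys : List P) : Prop :=
  w = (xs.map fun x => a T x).prod * (ys.map fun y => (a T y)⁻¹).prod ∧
  List.Chain' (fun p q => q ∉ σ p) xs ∧
  List.Chain' (fun p q => p ∉ σ q) ys ∧
  (∀ x ∈ xs.getLast?, ∀ y ∈ ys.head?, x ≠ y)

/-- `(ts, ss)` is a left normal form of `w`:
`w = a_{t₁}⁻¹ ⋯ a_{t_n}⁻¹ · a_{s₁} ⋯ a_{s_m}` with `s_{i+1} ∉ σ s_i`, `t_j ∉ σ t_{j+1}`,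
and the last entry of `ts` distinct from the first entry of `ss` when both are
nonempty. -/
def IsLNF {P L : Type} [Membership P L] (σ : P ≃ L) (T : Set (P × P × P))
    (w : A2TildeGroup T) (ts ss : List P) : Prop :=
  w = (ts.map fun t => (a T t)⁻¹).prod * (ss.map fun s => a T s).prod ∧
  List.Chain' (fun p q => q ∉ σ p) ss ∧
  List.Chain' (fun p q => p ∉ σ q) ts ∧
  (∀ t ∈ ts.getLast?, ∀ s ∈ ss.head?, t ≠ s)

/-- The evaluation of a letter: `(x, true)` is the generator `a_x` and `(x, false)` its
inverse. -/
def letterEval {P : Type} (T : Set (P × P × P)) (pb : P × Bool) : A2TildeGroup T :=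
  if pb.2 then a T pb.1 else (a T pb.1)⁻¹


/-!
Right multiplication by a generator moves the shape by one of three vectors: `a_e` by `(1, 0)`,
`(-1, 1)` or `(0, -1)`, and `a_e⁻¹` by `(0, 1)`, `(1, -1)` or `(-1, 0)`. Indeed a normal form of
`w a_e` is read off one of `w`: either `a_e` cancels, or it is pushed leftwards through the
negative part by interchanges `a_b⁻¹ a_c = a_{c'} a_{b'}⁻¹` (the plane provides the point whose
σ-line passes through `b` and `c`) and is then appended to, or contracted with, the positive part.
So `m + n` grows by at most one per letter, and in a product `u v` with `δ (u v) = δ u + δ v`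
every letter of a normal form `(C, D)` of `v` raises it; hence if `(X, Y)` is a normal form of
`u a_{c₁} ⋯ a_{c_k}`, then `(X, Y ++ D)` is one of `u v`.

The letters of `w₂` are then added one at a time to `v = w₁ w₂'`, keeping `w₀ · v` additive. A
negative letter `a_f⁻¹` extends the normal form of `w₀ v`, which ends with the nonempty negative
part of `v`, whose last letter `d` has `d ∉ σ f`. A positive letter is pushed through the negative
part of `w₀ v`, and the letter emerging cannot contract with the last positive letter: two
successive pushes of `a_c` and `a_e` with `e ∉ σ c` emerge as letters `d, d'` with `d' ∉ σ d`.
-/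

namespace A2Tilde

variable {P L : Type} [Membership P L] {σ : P ≃ L} {T : Set (P × P × P)}

section Words

def posWord (T : Set (P × P × P)) (xs : List P) : A2TildeGroup T :=
  (xs.map fun x => a T x).prod

def negWord (T : Set (P × P × P)) (ys : List P) : A2TildeGroup T :=
  (ys.map fun y => (a T y)⁻¹).prod

@[simp] theorem posWord_nil : posWord T [] = 1 := rfl
@[simp] theorem negWord_nil : negWord T [] = 1 := rfl

@[simp] theorem posWord_cons (x : P) (xs : List P) : posWord T (x :: xs) = a T x * posWord T xs :=
  List.prod_cons

@[simp] theorem negWord_cons (y : P) (ys : List P) :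
    negWord T (y :: ys) = (a T y)⁻¹ * negWord T ys :=
  List.prod_cons

@[simp] theorem posWord_append (xs xs' : List P) :
    posWord T (xs ++ xs') = posWord T xs * posWord T xs' := by
  simp [posWord]

@[simp] theorem negWord_append (ys ys' : List P) :
    negWord T (ys ++ ys') = negWord T ys * negWord T ys' := by
  simp [negWord]

theorem a_mul_a_mul_a {x y z : P} (h : (x, y, z) ∈ T) : a T x * a T y * a T z = 1 := by
  simpa [a, PresentedGroup.of] using PresentedGroup.one_of_mem (rels := A2Rels T) ⟨_, h, rfl⟩

theorem a_mul_a {x y z : P} (h : (x, y, z) ∈ T) : a T x * a T y = (a T z)⁻¹ :=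
  eq_inv_of_mul_eq_one_left (a_mul_a_mul_a h)

theorem a_inv_mul_a_inv {x y z : P} (h : (x, y, z) ∈ T) : (a T y)⁻¹ * (a T x)⁻¹ = a T z := by
  rw [← mul_inv_rev, a_mul_a h, inv_inv]

theorem a_inv_mul_a {z b c c' b' : P} (hb : (z, b, c') ∈ T) (hc : (z, c, b') ∈ T) :
    (a T b)⁻¹ * a T c = a T c' * (a T b')⁻¹ := by
  calc (a T b)⁻¹ * a T c = (a T z * a T b)⁻¹ * (a T z * a T c) := by group
    _ = a T c' * (a T b')⁻¹ := by rw [a_mul_a hb, a_mul_a hc, inv_inv]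

end Words

structure IsTriella (σ : P ≃ L) (T : Set (P × P × P)) : Prop where
  exists_iff : ∀ x y : P, (∃ z, (x, y, z) ∈ T) ↔ y ∈ σ x
  rotate : ∀ x y z : P, (x, y, z) ∈ T → (y, z, x) ∈ T
  unique : ∀ x y z z' : P, (x, y, z) ∈ T → (x, y, z') ∈ T → z = z'

namespace IsTriella

variable (hT : IsTriella σ T)
include hT

theorem mem_sigma₁₂ {x y z : P} (h : (x, y, z) ∈ T) : y ∈ σ x := (hT.exists_iff x y).1 ⟨z, h⟩

theorem mem_sigma₂₃ {x y z : P} (h : (x, y, z) ∈ T) : z ∈ σ y := hT.mem_sigma₁₂ (hT.rotate _ _ _ h)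

theorem mem_sigma₃₁ {x y z : P} (h : (x, y, z) ∈ T) : x ∈ σ z :=
  hT.mem_sigma₂₃ (hT.rotate _ _ _ h)

theorem exists_mem {x y : P} (h : y ∈ σ x) : ∃ z, (x, y, z) ∈ T := (hT.exists_iff x y).2 h

theorem fst_unique {x x' y z : P} (h : (x, y, z) ∈ T) (h' : (x', y, z) ∈ T) : x = x' :=
  hT.unique y z x x' (hT.rotate _ _ _ h) (hT.rotate _ _ _ h')

theorem snd_unique {x y y' z : P} (h : (x, y, z) ∈ T) (h' : (x, y', z) ∈ T) : y = y' :=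
  hT.fst_unique (hT.rotate _ _ _ h) (hT.rotate _ _ _ h')

end IsTriella

section Geometry

variable [Configuration.ProjectivePlane P L]

theorem eq_of_mem_sigma {p q u v : P} (hpq : p ≠ q) (hpu : p ∈ σ u) (hqu : q ∈ σ u)
    (hpv : p ∈ σ v) (hqv : q ∈ σ v) : u = v :=
  σ.injective ((Configuration.Nondegenerate.eq_or_eq hpu hqu hpv hqv).resolve_left hpq)

theorem exists_interchange (hT : IsTriella σ T) {b c : P} (hbc : b ≠ c) :
    ∃ z c' b', (z, b, c') ∈ T ∧ (z, c, b') ∈ T := by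
  obtain ⟨z, hbz, hcz⟩ : ∃ z, b ∈ σ z ∧ c ∈ σ z := ⟨σ.symm (Configuration.HasLines.mkLine hbc),
    by simpa using Configuration.HasLines.mkLine_ax (L := L) hbc⟩
  obtain ⟨c', hc'⟩ := hT.exists_mem hbz
  obtain ⟨b', hb'⟩ := hT.exists_mem hcz
  exact ⟨z, c', b', hc', hb'⟩

end Geometry

theorem _root_.List.IsChain.rel_of_append_singleton {α : Type*} {R : α → α → Prop}
    {l : List α} {a b : α} (h : (l ++ [b]).IsChain R) (ha : a ∈ l.getLast?) : R a b :=
  (List.isChain_append.1 h).2.2 a ha b (by simp)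

/-- `Pushes T Y e d B` says that moving `a_e` leftwards through `a_{y₁}⁻¹ ⋯ a_{yₙ}⁻¹` by the
interchanges `a_y⁻¹ a_{d'} = a_d a_b⁻¹` of `a_inv_mul_a` turns it into `a_d` followed by
`a_{b₁}⁻¹ ⋯ a_{bₙ}⁻¹`. -/
inductive Pushes (T : Set (P × P × P)) : List P → P → P → List P → Prop
  | nil (e : P) : Pushes T [] e e []
  | cons {y e d d' b z : P} {Y B : List P} (h : Pushes T Y e d' B) (hy : (z, y, d) ∈ T)
      (hb : (z, d', b) ∈ T) (hne : y ≠ d') : Pushes T (y :: Y) e d (b :: B)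

namespace Pushes

variable {Y B : List P} {e d : P}

theorem negWord_mul_a (h : Pushes T Y e d B) : negWord T Y * a T e = a T d * negWord T B := by
  induction h with
  | nil => simp
  | cons _ hy hb _ ih =>
    rw [negWord_cons, negWord_cons, mul_assoc, ih, ← mul_assoc, a_inv_mul_a hy hb, mul_assoc]

theorem length_eq (h : Pushes T Y e d B) : B.length = Y.length := by
  induction h <;> simp_all

theorem eq_of_nil (h : Pushes T [] e d B) : d = e ∧ B = [] := by
  cases h
  exact ⟨rfl, rfl⟩

theorem mem_sigma_head (hT : IsTriella σ T) {y : P} (h : Pushes T (y :: Y) e d B) : d ∈ σ y := by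
  cases h with
  | cons _ hy _ _ => exact hT.mem_sigma₂₃ hy

theorem mem_sigma_of_mem_getLast (hT : IsTriella σ T) (h : Pushes T Y e d B) :
    ∀ b ∈ B.getLast?, b ∈ σ e := by
  induction h with
  | nil => simp
  | cons h _ hb _ ih =>
    cases h with
    | nil => simpa using hT.mem_sigma₂₃ hb
    | cons => simpa using ih

theorem append {D B' : List P} {f g : P} (h : Pushes T Y g d B) (h' : Pushes T D f g B') :
    Pushes T (Y ++ D) f d (B ++ B') := by
  induction h with
  | nil => exact h'
  | cons _ hy hb hne ih => exact .cons (ih h') hy hb hne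

variable [Configuration.ProjectivePlane P L]

theorem exists_of_isChain (hT : IsTriella σ T) :
    ∀ {Y : List P}, Y.IsChain (fun p q => p ∉ σ q) → (∀ y ∈ Y.getLast?, y ≠ e) →
      ∃ d B, Pushes T Y e d B
  | [], _, _ => ⟨e, [], .nil e⟩
  | y :: Y, hY, hlast => by
    obtain ⟨d', B, h⟩ := exists_of_isChain hT (List.isChain_cons.1 hY).2
      (fun y' hy' => hlast y' (by cases Y <;> simp_all))
    have hne : y ≠ d' := by
      cases Y with
      | nil => exact fun hyd => hlast y (by simp) (hyd.trans h.eq_of_nil.1)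
      | cons y' Y => exact fun hyd => (List.isChain_cons_cons.1 hY).1 (hyd ▸ h.mem_sigma_head hT)
    obtain ⟨z, d, b, hy, hb⟩ := exists_interchange hT hne
    exact ⟨d, b :: B, .cons h hy hb hne⟩

theorem isChain (hT : IsTriella σ T) (h : Pushes T Y e d B)
    (hY : Y.IsChain (fun p q => p ∉ σ q)) : B.IsChain (fun p q => p ∉ σ q) := by
  induction h with
  | nil => exact List.isChain_nil
  | @cons y e d d' b z Y B h hy hb hne ih =>
    refine List.isChain_cons.2 ⟨?_, ih (List.isChain_cons.1 hY).2⟩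
    cases h with
    | nil => simp
    | @cons y' _ _ d'' b' z' _ _ _ hy' hb' hne' =>
      simp only [List.head?_cons, Option.mem_def, Option.some.injEq, forall_eq']
      intro hbb'
      have hyy' : y ∉ σ y' := (List.isChain_cons_cons.1 hY).1
      by_cases hz' : z' = b
      · subst hz'
        exact hyy' (hT.fst_unique hb (hT.rotate _ _ _ hy') ▸ hT.mem_sigma₁₂ hy)
      · have hd' : d' = b' := eq_of_mem_sigma hz' (hT.mem_sigma₃₁ hy') (hT.mem_sigma₂₃ hb)
          (hT.mem_sigma₃₁ hb') hbb'
        exact hne' (hT.snd_unique hy' (hd' ▸ hb'))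

theorem not_mem_sigma (hT : IsTriella σ T) {c e d' : P} {B' : List P}
    (h : Pushes T Y c d B) (h' : Pushes T B e d' B') (hec : e ∉ σ c) : d' ∉ σ d := by
  induction h generalizing d' B' with
  | nil =>
    obtain ⟨rfl, -⟩ := h'.eq_of_nil
    exact hec
  | @cons y _ d d₁ b z _ _ _ hy hb hne ih =>
    cases h' with
    | @cons _ _ _ d₁' _ z' _ _ h' hb' hb'' _ =>
      intro hd'd
      by_cases hz : z = d'
      · subst hz
        exact ih h' hec (hT.fst_unique hb' (hT.rotate _ _ _ hb) ▸ hT.mem_sigma₁₂ hb'')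
      · have hdb : d = b := eq_of_mem_sigma hz (hT.mem_sigma₃₁ hy) hd'd (hT.mem_sigma₃₁ hb)
          (hT.mem_sigma₂₃ hb')
        exact hne (hT.snd_unique hy (hdb ▸ hb))

end Pushes

section NormalForms

variable {w : A2TildeGroup T} {X Y : List P}

theorem isRNF_iff :
    IsRNF σ T w X Y ↔ w = posWord T X * negWord T Y ∧ X.IsChain (fun p q => q ∉ σ p) ∧
      Y.IsChain (fun p q => p ∉ σ q) ∧ ∀ x ∈ X.getLast?, ∀ y ∈ Y.head?, x ≠ y :=
  Iff.rfl

theorem _root_.IsRNF.eq_posWord_mul_negWord (h : IsRNF σ T w X Y) :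
    w = posWord T X * negWord T Y :=
  h.1

theorem _root_.IsRNF.isChain_pos (h : IsRNF σ T w X Y) : X.IsChain (fun p q => q ∉ σ p) :=
  h.2.1

theorem _root_.IsRNF.isChain_neg (h : IsRNF σ T w X Y) : Y.IsChain (fun p q => p ∉ σ q) :=
  h.2.2.1

theorem _root_.IsRNF.mul_a {y : P} (h : IsRNF σ T w X (Y ++ [y])) :
    IsRNF σ T (w * a T y) X Y := by
  obtain ⟨hw, hX, hY, hXY⟩ := isRNF_iff.1 h
  refine isRNF_iff.2 ⟨by simp [hw, mul_assoc], hX, hY.left_of_append, fun x hx y' hy' => ?_⟩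
  exact hXY x hx y' (by simp_all [List.head?_append])

theorem _root_.IsRNF.mul_a_inv {x : P} (h : IsRNF σ T w (X ++ [x]) []) :
    IsRNF σ T (w * (a T x)⁻¹) X [] := by
  obtain ⟨hw, hX, -, -⟩ := isRNF_iff.1 h
  exact isRNF_iff.2 ⟨by simp [hw], hX.left_of_append, List.isChain_nil, by simp⟩

theorem _root_.IsRNF.mul_a_inv_append {f : P} (h : IsRNF σ T w X Y)
    (hY : ∀ y ∈ Y.getLast?, y ∉ σ f) (hX : Y = [] → ∀ x ∈ X.getLast?, x ≠ f) :
    IsRNF σ T (w * (a T f)⁻¹) X (Y ++ [f]) := by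
  obtain ⟨hw, hXc, hYc, hXY⟩ := isRNF_iff.1 h
  refine isRNF_iff.2 ⟨by simp [hw, mul_assoc], hXc, hYc.append (List.isChain_singleton f)
    (by simpa using hY), fun x hx y hy => ?_⟩
  rcases Y with _ | ⟨y₁, Y⟩
  · simp only [List.nil_append, List.head?_cons, Option.mem_def, Option.some.injEq] at hy
    exact hy ▸ hX rfl x hx
  · exact hXY x hx y (by simpa using hy)

section Plane

variable [Configuration.ProjectivePlane P L] (hT : IsTriella σ T)
include hT

theorem _root_.IsRNF.mul_a_of_pushes {e d : P} {B : List P} (h : IsRNF σ T w X Y)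
    (hp : Pushes T Y e d B) (hd : ∀ x ∈ X.getLast?, d ∉ σ x) :
    IsRNF σ T (w * a T e) (X ++ [d]) B := by
  obtain ⟨hw, hXc, hYc, -⟩ := isRNF_iff.1 h
  refine isRNF_iff.2 ⟨by rw [hw, mul_assoc, hp.negWord_mul_a]; simp [mul_assoc],
    hXc.append (List.isChain_singleton d) (by simpa using hd), hp.isChain hT hYc, ?_⟩
  cases hp with
  | nil => simp
  | cons _ hy hb hne =>
    simp only [List.getLast?_append, List.getLast?_singleton, Option.some_or, Option.mem_def,
      Option.some.injEq, List.head?_cons, forall_eq']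
    rintro rfl
    exact hne (hT.snd_unique hy hb)

theorem _root_.IsRNF.exists_mul_a_of_pushes {x e d : P} {B : List P} (h : IsRNF σ T w (X ++ [x]) Y)
    (hp : Pushes T Y e d B) (hd : d ∈ σ x) :
    ∃ z, IsRNF σ T (w * a T e) X (z :: B) := by
  obtain ⟨hw, hXc, hYc, hXY⟩ := isRNF_iff.1 h
  obtain ⟨z, hz⟩ := hT.exists_mem hd
  refine ⟨z, isRNF_iff.2 ⟨?_, hXc.left_of_append, ?_, ?_⟩⟩
  · rw [hw, mul_assoc, hp.negWord_mul_a, posWord_append, mul_assoc, ← mul_assoc (posWord T [x])]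
    simp [a_mul_a hz]
  · refine List.isChain_cons.2 ⟨?_, hp.isChain hT hYc⟩
    cases hp with
    | nil => simp
    | @cons y _ _ d₁ b z₁ _ _ _ hy hb hne =>
      simp only [List.head?_cons, Option.mem_def, Option.some.injEq, forall_eq']
      intro hzb
      have hxy : x ≠ y := hXY x (by simp) y (by simp)
      by_cases hzz : z = z₁
      · subst hzz
        exact hxy (hT.fst_unique hz (hT.rotate _ _ _ hy))
      · have hbd : b = d := eq_of_mem_sigma hzz hzb (hT.mem_sigma₃₁ hb) (hT.mem_sigma₂₃ hz)
          (hT.mem_sigma₃₁ hy)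
        exact hne (hT.snd_unique hy (hbd ▸ hb))
  · intro x₀ hx₀ y hy
    simp only [List.head?_cons, Option.mem_def, Option.some.injEq] at hy
    subst hy
    rintro rfl
    exact hXc.rel_of_append_singleton hx₀ (hT.mem_sigma₃₁ hz)

end Plane

end NormalForms

section ShapeFunction

variable {w u v : A2TildeGroup T} {X Y : List P}

def IsShapeFunction (σ : P ≃ L) (T : Set (P × P × P)) (δ : A2TildeGroup T → ℕ × ℕ) : Prop :=
  ∀ (w : A2TildeGroup T) (m n : ℕ),
    δ w = (m, n) ↔ ∃ xs ys : List P, IsRNF σ T w xs ys ∧ xs.length = m ∧ ys.length = n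

namespace IsShapeFunction

variable {δ : A2TildeGroup T → ℕ × ℕ} (hδ : IsShapeFunction σ T δ)
include hδ

theorem eq_of_isRNF (h : IsRNF σ T w X Y) : δ w = (X.length, Y.length) :=
  (hδ w _ _).2 ⟨X, Y, h, rfl, rfl⟩

theorem exists_isRNF (w : A2TildeGroup T) :
    ∃ X Y, IsRNF σ T w X Y ∧ δ w = (X.length, Y.length) := by
  obtain ⟨X, Y, h, -, -⟩ := (hδ w (δ w).1 (δ w).2).1 rfl
  exact ⟨X, Y, h, hδ.eq_of_isRNF h⟩

theorem eq_one_or_exists_mul (w : A2TildeGroup T) :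
    w = 1 ∨ (∃ w' e, w' * a T e = w ∧ δ w = δ w' + (1, 0)) ∨
      ∃ w' f, w' * (a T f)⁻¹ = w ∧ δ w = δ w' + (0, 1) := by
  obtain ⟨E, F, hR, hw⟩ := hδ.exists_isRNF w
  rcases F.eq_nil_or_concat' with rfl | ⟨F, f, rfl⟩
  · rcases E.eq_nil_or_concat' with rfl | ⟨E, e, rfl⟩
    · exact Or.inl (by simpa using hR.eq_posWord_mul_negWord)
    · refine Or.inr (Or.inl ⟨_, e, inv_mul_cancel_right w (a T e), ?_⟩)
      rw [hw, hδ.eq_of_isRNF hR.mul_a_inv]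
      simp
  · refine Or.inr (Or.inr ⟨_, f, mul_inv_cancel_right w (a T f), ?_⟩)
    rw [hw, hδ.eq_of_isRNF hR.mul_a]
    simp

variable [Configuration.ProjectivePlane P L] (hT : IsTriella σ T)
include hT

theorem isRNF_mul_a_or (hR : IsRNF σ T w X Y) (e : P) :
    (∃ d B, Pushes T Y e d B ∧ IsRNF σ T (w * a T e) (X ++ [d]) B) ∨
      δ (w * a T e) + (1, 0) = δ w + (0, 1) ∨
      (Y.getLast? = some e ∧ δ (w * a T e) + (0, 1) = δ w) := by
  by_cases hlast : Y.getLast? = some e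
  · obtain ⟨Y₀, rfl⟩ := List.getLast?_eq_some_iff.1 hlast
    refine Or.inr (Or.inr ⟨hlast, ?_⟩)
    rw [hδ.eq_of_isRNF hR.mul_a, hδ.eq_of_isRNF hR]
    simp
  obtain ⟨d, B, hp⟩ := Pushes.exists_of_isChain (e := e) hT hR.isChain_neg
    (fun y hy hye => hlast (hye ▸ hy))
  by_cases hc : ∃ x ∈ X.getLast?, d ∈ σ x
  · obtain ⟨x, hx, hdx⟩ := hc
    obtain ⟨X₀, rfl⟩ := List.getLast?_eq_some_iff.1 hx
    obtain ⟨z, hz⟩ := hR.exists_mul_a_of_pushes hT hp hdx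
    refine Or.inr (Or.inl ?_)
    simp [hδ.eq_of_isRNF hz, hδ.eq_of_isRNF hR, hp.length_eq]
  · push Not at hc
    exact Or.inl ⟨d, B, hp, hR.mul_a_of_pushes hT hp hc⟩

theorem isRNF_mul_a_inv_or (hR : IsRNF σ T w X Y) (f : P) :
    IsRNF σ T (w * (a T f)⁻¹) X (Y ++ [f]) ∨
      δ (w * (a T f)⁻¹) + (0, 1) = δ w + (1, 0) ∨ δ (w * (a T f)⁻¹) + (1, 0) = δ w := by
  by_cases hc : ∃ y ∈ Y.getLast?, y ∈ σ f
  · obtain ⟨y, hy, hyf⟩ := hc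
    obtain ⟨Y₀, rfl⟩ := List.getLast?_eq_some_iff.1 hy
    obtain ⟨r, hr⟩ := hT.exists_mem hyf
    have hw : w * (a T f)⁻¹ = w * a T y * a T r := by
      rw [mul_assoc w, ← a_inv_mul_a_inv hr]
      group
    rw [hw]
    rcases hδ.isRNF_mul_a_or hT hR.mul_a r with ⟨d, B, hp, hRB⟩ | h | ⟨hlast, -⟩
    · refine Or.inr (Or.inl ?_)
      rw [hδ.eq_of_isRNF hRB, hδ.eq_of_isRNF hR, hp.length_eq]
      simp
    · refine Or.inr (Or.inr ?_)
      rw [h, hδ.eq_of_isRNF hR.mul_a, hδ.eq_of_isRNF hR]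
      simp
    · exact absurd (hT.mem_sigma₂₃ hr) (hR.isChain_neg.rel_of_append_singleton hlast)
  · push Not at hc
    by_cases hcancel : Y = [] ∧ X.getLast? = some f
    · obtain ⟨rfl, hx⟩ := hcancel
      obtain ⟨X₀, rfl⟩ := List.getLast?_eq_some_iff.1 hx
      refine Or.inr (Or.inr ?_)
      rw [hδ.eq_of_isRNF hR.mul_a_inv, hδ.eq_of_isRNF hR]
      simp
    · exact Or.inl (hR.mul_a_inv_append hc fun hY x hx hxf => hcancel ⟨hY, hxf ▸ hx⟩)

theorem shape_mul_a_cases (w : A2TildeGroup T) (e : P) :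
    δ (w * a T e) = δ w + (1, 0) ∨ δ (w * a T e) + (1, 0) = δ w + (0, 1) ∨
      δ (w * a T e) + (0, 1) = δ w := by
  obtain ⟨X, Y, hR, hw⟩ := hδ.exists_isRNF w
  rcases hδ.isRNF_mul_a_or hT hR e with ⟨d, B, hp, hRB⟩ | h | ⟨-, h⟩
  · left
    rw [hδ.eq_of_isRNF hRB, hw, hp.length_eq]
    simp
  · exact Or.inr (Or.inl h)
  · exact Or.inr (Or.inr h)

theorem shape_mul_a_inv_cases (w : A2TildeGroup T) (f : P) :
    δ (w * (a T f)⁻¹) = δ w + (0, 1) ∨ δ (w * (a T f)⁻¹) + (0, 1) = δ w + (1, 0) ∨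
      δ (w * (a T f)⁻¹) + (1, 0) = δ w := by
  obtain ⟨X, Y, hR, hw⟩ := hδ.exists_isRNF w
  refine (hδ.isRNF_mul_a_inv_or hT hR f).imp_left fun hRf => ?_
  rw [hδ.eq_of_isRNF hRf, hw]
  simp

theorem size_mul_a_le (w : A2TildeGroup T) (e : P) :
    (δ (w * a T e)).1 + (δ (w * a T e)).2 ≤ (δ w).1 + (δ w).2 + 1 := by
  rcases hδ.shape_mul_a_cases hT w e with h | h | h <;>
    simp only [Prod.ext_iff, Prod.fst_add, Prod.snd_add] at h <;> omega

theorem size_mul_a_inv_le (w : A2TildeGroup T) (f : P) :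
    (δ (w * (a T f)⁻¹)).1 + (δ (w * (a T f)⁻¹)).2 ≤ (δ w).1 + (δ w).2 + 1 := by
  rcases hδ.shape_mul_a_inv_cases hT w f with h | h | h <;>
    simp only [Prod.ext_iff, Prod.fst_add, Prod.snd_add] at h <;> omega

theorem shape_mul_a_of_size {e : P}
    (h : (δ w).1 + (δ w).2 < (δ (w * a T e)).1 + (δ (w * a T e)).2) :
    δ (w * a T e) = δ w + (1, 0) := by
  rcases hδ.shape_mul_a_cases hT w e with h' | h' | h'
  · exact h'
  all_goals simp only [Prod.ext_iff, Prod.fst_add, Prod.snd_add] at h'; omega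

theorem shape_mul_a_inv_of_size {f : P}
    (h : (δ w).1 + (δ w).2 < (δ (w * (a T f)⁻¹)).1 + (δ (w * (a T f)⁻¹)).2) :
    δ (w * (a T f)⁻¹) = δ w + (0, 1) := by
  rcases hδ.shape_mul_a_inv_cases hT w f with h' | h' | h'
  · exact h'
  all_goals simp only [Prod.ext_iff, Prod.fst_add, Prod.snd_add] at h'; omega

theorem size_mul_posWord_le (u : A2TildeGroup T) (C : List P) :
    (δ (u * posWord T C)).1 + (δ (u * posWord T C)).2 ≤ (δ u).1 + (δ u).2 + C.length := by
  induction C generalizing u with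
  | nil => simp
  | cons c C ih =>
    have := hδ.size_mul_a_le hT u c
    have := ih (u * a T c)
    rw [posWord_cons, ← mul_assoc, List.length_cons]
    omega

theorem size_mul_negWord_le (u : A2TildeGroup T) (D : List P) :
    (δ (u * negWord T D)).1 + (δ (u * negWord T D)).2 ≤ (δ u).1 + (δ u).2 + D.length := by
  induction D generalizing u with
  | nil => simp
  | cons d D ih =>
    have := hδ.size_mul_a_inv_le hT u d
    have := ih (u * (a T d)⁻¹)
    rw [negWord_cons, ← mul_assoc, List.length_cons]
    omega

theorem size_mul_le (u v : A2TildeGroup T) :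
    (δ (u * v)).1 + (δ (u * v)).2 ≤ (δ u).1 + (δ u).2 + ((δ v).1 + (δ v).2) := by
  obtain ⟨C, D, hv, hδv⟩ := hδ.exists_isRNF v
  have := hδ.size_mul_posWord_le hT u C
  have := hδ.size_mul_negWord_le hT (u * posWord T C) D
  rw [hδv, hv.eq_posWord_mul_negWord, ← mul_assoc]
  omega

theorem isRNF_mul_a_inv {f : P} (hR : IsRNF σ T w X Y)
    (h : δ (w * (a T f)⁻¹) = δ w + (0, 1)) : IsRNF σ T (w * (a T f)⁻¹) X (Y ++ [f]) :=
  (hδ.isRNF_mul_a_inv_or hT hR f).resolve_right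
    (by rw [h]; simp only [Prod.ext_iff, Prod.fst_add, Prod.snd_add]; omega)

theorem exists_isRNF_mul_a {e : P} (hR : IsRNF σ T w X Y)
    (h : δ (w * a T e) = δ w + (1, 0)) :
    ∃ d B, Pushes T Y e d B ∧ IsRNF σ T (w * a T e) (X ++ [d]) B :=
  (hδ.isRNF_mul_a_or hT hR e).resolve_right <| by
    rintro (h' | ⟨-, h'⟩) <;> rw [h] at h' <;>
      simp only [Prod.ext_iff, Prod.fst_add, Prod.snd_add] at h' <;> omega

theorem isRNF_mul_negWord {D : List P} (hR : IsRNF σ T w X Y)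
    (hsize : (δ w).1 + (δ w).2 + D.length ≤
      (δ (w * negWord T D)).1 + (δ (w * negWord T D)).2) :
    IsRNF σ T (w * negWord T D) X (Y ++ D) := by
  induction D generalizing w Y with
  | nil => simpa using hR
  | cons d D ih =>
    have := hδ.size_mul_a_inv_le hT w d
    have := hδ.size_mul_negWord_le hT (w * (a T d)⁻¹) D
    rw [negWord_cons, ← mul_assoc, List.length_cons] at hsize
    rw [negWord_cons, ← mul_assoc]
    have hd := hδ.isRNF_mul_a_inv hT hR (hδ.shape_mul_a_inv_of_size hT (f := d) (by omega))
    simpa using ih hd (by omega)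

theorem isRNF_mul_of_shape_mul {C D : List P} (hadd : δ (u * v) = δ u + δ v)
    (hRv : IsRNF σ T v C D) (hR : IsRNF σ T (u * posWord T C) X Y) :
    IsRNF σ T (u * v) X (Y ++ D) := by
  have huv : u * v = u * posWord T C * negWord T D := by
    rw [hRv.eq_posWord_mul_negWord, mul_assoc]
  have := hδ.size_mul_posWord_le hT u C
  rw [huv]
  refine hδ.isRNF_mul_negWord hT hR ?_
  rw [← huv, hadd, hδ.eq_of_isRNF hRv, Prod.fst_add, Prod.snd_add]
  omega

theorem exists_isRNF_mul_of_shape_mul {C D : List P} {c : P} (hadd : δ (u * v) = δ u + δ v)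
    (hRv : IsRNF σ T v (C ++ [c]) D) :
    ∃ X Y₀ c' Y, Pushes T Y₀ c c' Y ∧ IsRNF σ T (u * v) (X ++ [c']) (Y ++ D) := by
  have huC : u * posWord T (C ++ [c]) = u * posWord T C * a T c := by simp [mul_assoc]
  have := hδ.size_mul_posWord_le hT u C
  have := hδ.size_mul_a_le hT (u * posWord T C) c
  have := hδ.size_mul_negWord_le hT (u * posWord T (C ++ [c])) D
  rw [mul_assoc, ← hRv.eq_posWord_mul_negWord, hadd, hδ.eq_of_isRNF hRv, huC] at this
  simp only [Prod.fst_add, Prod.snd_add, List.length_append, List.length_singleton] at this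
  obtain ⟨X, Y₀, hR₀, -⟩ := hδ.exists_isRNF (u * posWord T C)
  obtain ⟨c', Y, hp, hR⟩ :=
    hδ.exists_isRNF_mul_a hT hR₀ (hδ.shape_mul_a_of_size hT (e := c) (by omega))
  exact ⟨X, Y₀, c', Y, hp, hδ.isRNF_mul_of_shape_mul hT hadd hRv (huC ▸ hR)⟩

theorem shape_mul_mul_a_inv {f : P} (hadd : δ (u * v) = δ u + δ v)
    (hf : δ (v * (a T f)⁻¹) = δ v + (0, 1)) (hv : 1 ≤ (δ v).2) :
    δ (u * (v * (a T f)⁻¹)) = δ u + δ (v * (a T f)⁻¹) := by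
  obtain ⟨C, D, hRv, hδv⟩ := hδ.exists_isRNF v
  rcases D.eq_nil_or_concat' with rfl | ⟨D, d, rfl⟩
  · simp [hδv] at hv
  have hdf : d ∉ σ f :=
    (hδ.isRNF_mul_a_inv hT hRv hf).isChain_neg.rel_of_append_singleton (by simp)
  obtain ⟨X, Y, hR, -⟩ := hδ.exists_isRNF (u * posWord T C)
  have hRuv := hδ.isRNF_mul_of_shape_mul hT hadd hRv hR
  have hRuvf := hRuv.mul_a_inv_append (f := f) (by simpa using hdf) (by simp)
  rw [← mul_assoc, hδ.eq_of_isRNF hRuvf, hf, ← add_assoc, ← hadd, hδ.eq_of_isRNF hRuv]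
  simp [add_assoc]

theorem shape_mul_mul_a {f : P} (hadd : δ (u * v) = δ u + δ v)
    (hf : δ (v * a T f) = δ v + (1, 0)) (hv : 1 ≤ (δ v).1) :
    δ (u * (v * a T f)) = δ u + δ (v * a T f) := by
  obtain ⟨C, D, hRv, hδv⟩ := hδ.exists_isRNF v
  rcases C.eq_nil_or_concat' with rfl | ⟨C, c, rfl⟩
  · simp [hδv] at hv
  obtain ⟨d, B, hpD, hRvf⟩ := hδ.exists_isRNF_mul_a hT hRv hf
  have hdc : d ∉ σ c := hRvf.isChain_pos.rel_of_append_singleton (by simp)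
  obtain ⟨X, Y₀, c', Y, hpY, hRuv⟩ := hδ.exists_isRNF_mul_of_shape_mul hT hadd hRv
  obtain ⟨d', B', hpd⟩ := Pushes.exists_of_isChain (e := d) hT
    hRuv.isChain_neg.left_of_append
    fun y hy hyd => hdc (hyd ▸ hpY.mem_sigma_of_mem_getLast hT y hy)
  have hRuvf := hRuv.mul_a_of_pushes hT (hpd.append hpD)
    (by simpa using hpY.not_mem_sigma hT hpd hdc)
  rw [← mul_assoc, hδ.eq_of_isRNF hRuvf, hf, ← add_assoc, ← hadd, hδ.eq_of_isRNF hRuv]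
  simp [hpd.length_eq, hpD.length_eq]

theorem shape_mul_of_shape_mul_mul_a {e : P}
    (hadd : δ (v * (w * a T e)) = δ v + δ (w * a T e)) (he : δ (w * a T e) = δ w + (1, 0)) :
    δ (v * w) = δ v + δ w := by
  have := hδ.size_mul_le hT v w
  have := hδ.size_mul_a_le hT (v * w) e
  have hstep := hδ.shape_mul_a_of_size hT (w := v * w) (e := e) (by
    rw [mul_assoc, hadd, he]
    simp only [Prod.fst_add, Prod.snd_add]
    omega)
  rw [mul_assoc, hadd, he, ← add_assoc] at hstep
  exact (add_right_cancel hstep).symm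

theorem shape_mul_of_shape_mul_mul_a_inv {f : P}
    (hadd : δ (v * (w * (a T f)⁻¹)) = δ v + δ (w * (a T f)⁻¹))
    (hf : δ (w * (a T f)⁻¹) = δ w + (0, 1)) :
    δ (v * w) = δ v + δ w := by
  have := hδ.size_mul_le hT v w
  have := hδ.size_mul_a_inv_le hT (v * w) f
  have hstep := hδ.shape_mul_a_inv_of_size hT (w := v * w) (f := f) (by
    rw [mul_assoc, hadd, hf]
    simp only [Prod.fst_add, Prod.snd_add]
    omega)
  rw [mul_assoc, hadd, hf, ← add_assoc] at hstep
  exact (add_right_cancel hstep).symm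

theorem shape_mul_mul_of_shape_mul (huv : δ (u * v) = δ u + δ v) (hv : (1, 1) ≤ δ v)
    (w : A2TildeGroup T) (hvw : δ (v * w) = δ v + δ w) :
    δ (u * (v * w)) = δ u + δ (v * w) := by
  obtain ⟨hv₁, hv₂⟩ := Prod.mk_le_mk.1 hv
  rcases hδ.eq_one_or_exists_mul w with rfl | ⟨w, e, rfl, he⟩ | ⟨w, f, rfl, hf⟩
  · simpa using huv
  · have hvw' := hδ.shape_mul_of_shape_mul_mul_a hT hvw he
    have ih := shape_mul_mul_of_shape_mul huv hv w hvw'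
    rw [← mul_assoc v]
    exact hδ.shape_mul_mul_a hT ih (by rw [mul_assoc, hvw, he, hvw', add_assoc])
      (by rw [hvw', Prod.fst_add]; omega)
  · have hvw' := hδ.shape_mul_of_shape_mul_mul_a_inv hT hvw hf
    have ih := shape_mul_mul_of_shape_mul huv hv w hvw'
    rw [← mul_assoc v]
    exact hδ.shape_mul_mul_a_inv hT ih (by rw [mul_assoc, hvw, hf, hvw', add_assoc])
      (by rw [hvw', Prod.snd_add]; omega)
termination_by (δ w).1 + (δ w).2
decreasing_by
  all_goals
    subst_vars
    simp only [Prod.ext_iff, Prod.fst_add, Prod.snd_add] at *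
    omega

end IsShapeFunction

end ShapeFunction

end A2Tilde

theorem a2_shape_additive_triple_general (P L : Type)
    [Membership P L] [Configuration.ProjectivePlane P L]
    (σ : P ≃ L) (T : Set (P × P × P))
    (hT1 : ∀ x y : P, (∃ z, (x, y, z) ∈ T) ↔ y ∈ σ x)
    (hT2 : ∀ x y z : P, (x, y, z) ∈ T → (y, z, x) ∈ T)
    (hT3 : ∀ x y z z' : P, (x, y, z) ∈ T → (x, y, z') ∈ T → z = z')
    (δ : A2TildeGroup T → ℕ × ℕ)
    (hδ : ∀ (w : A2TildeGroup T) (m n : ℕ),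
      δ w = (m, n) ↔ ∃ xs ys : List P, IsRNF σ T w xs ys ∧ xs.length = m ∧ ys.length = n)
    (w₀ w₁ w₂ : A2TildeGroup T)
    (h01 : δ (w₀ * w₁) = δ w₀ + δ w₁)
    (h12 : δ (w₁ * w₂) = δ w₁ + δ w₂)
    (h1 : (1, 1) ≤ δ w₁) :
    δ (w₀ * w₁ * w₂) = δ w₀ + δ w₁ + δ w₂ := by
  rw [mul_assoc, add_assoc, ← h12]
  exact A2Tilde.IsShapeFunction.shape_mul_mul_of_shape_mul hδ ⟨hT1, hT2, hT3⟩ h01 h1 w₂ h12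

/-- if `δ (w₀·w₁) = δ w₀ + δ w₁`, `δ (w₁·w₂) = δ w₁ + δ w₂` and
`(1,1) ≤ δ w₁`, then `δ (w₀·w₁·w₂) = δ w₀ + δ w₁ + δ w₂`. -/
theorem a2_shape_additive_triple (P L : Type) [Fintype P] [Fintype L]
    [Membership P L] [Configuration.ProjectivePlane P L]
    (σ : P ≃ L) (T : Set (P × P × P))
    (hT1 : ∀ x y : P, (∃ z, (x, y, z) ∈ T) ↔ y ∈ σ x)
    (hT2 : ∀ x y z : P, (x, y, z) ∈ T → (y, z, x) ∈ T)
    (hT3 : ∀ x y z z' : P, (x, y, z) ∈ T → (x, y, z') ∈ T → z = z')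
    (δ : A2TildeGroup T → ℕ × ℕ)
    (hδ : ∀ (w : A2TildeGroup T) (m n : ℕ),
      δ w = (m, n) ↔ ∃ xs ys : List P, IsRNF σ T w xs ys ∧ xs.length = m ∧ ys.length = n)
    (w₀ w₁ w₂ : A2TildeGroup T)
    (h01 : δ (w₀ * w₁) = δ w₀ + δ w₁)
    (h12 : δ (w₁ * w₂) = δ w₁ + δ w₂)
    (h1 : (1, 1) ≤ δ w₁) :
    δ (w₀ * w₁ * w₂) = δ w₀ + δ w₁ + δ w₂ :=
  a2_shape_additive_triple_general P L σ T hT1 hT2 hT3 δ hδ w₀ w₁ w₂ h01 h12 h1
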